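/- arXiv:2106.01850 — 2 statements merged into one kernel-verified Lean document; each statement's English description precedes it below -/
import Mathlib

section
/- Compositionality of H-equivalence under sequential composition: if the free variables of C and D are contained in H, A ≈_H B, and C ≈_H D, then the sequential compositions satisfy (A ; C) ≈_H (B ; D). -/
abbrev State (V : Type*) := V → ℝ

def StateEq {V : Type*} (H : Set V) (σ τ : State V) : Prop :=
  ∀ x ∈ H, σ x = τ x

def ProgEq {V : Type*} (H : Set V) (A B : State V → State V → Prop) : Prop :=
  (∀ σ₀ σ₁, A σ₀ σ₁ →
    ∃ σ₀' σ₁', B σ₀' σ₁' ∧ StateEq H σ₀ σ₀' ∧ StateEq H σ₁ σ₁') ∧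
  (∀ σ₀ σ₁, B σ₀ σ₁ →
    ∃ σ₀' σ₁', A σ₀' σ₁' ∧ StateEq H σ₀ σ₀' ∧ StateEq H σ₁ σ₁')

/-- The free variables of `P` are contained in `H` (coincidence property):
the behavior of `P` on `H` depends only on the values of variables in `H`. -/
def FVIn {V : Type*} (P : State V → State V → Prop) (H : Set V) : Prop :=
  ∀ σ τ σ', StateEq H σ τ → P σ σ' → ∃ τ', P τ τ' ∧ StateEq H σ' τ'

/-- Sequential composition of programs (relational composition). -/
def SeqComp {V : Type*} (A C : State V → State V → Prop) :
    State V → State V → Prop :=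
  fun σ σ'' => ∃ μ, A σ μ ∧ C μ σ''

/-- Compositionality of H-equivalence under sequential composition. -/
theorem progEq_seq {V : Type*} (H : Set V)
    (A B C D : State V → State V → Prop)
    (hC : FVIn C H) (hD : FVIn D H)
    (hAB : ProgEq H A B) (hCD : ProgEq H C D) :
    ProgEq H (SeqComp A C) (SeqComp B D) := by
  have symm : ∀ σ τ : State V, StateEq H σ τ → StateEq H τ σ :=
    fun σ τ h x hx => (h x hx).symm
  have trans : ∀ σ τ ρ : State V, StateEq H σ τ → StateEq H τ ρ → StateEq H σ ρ :=
    fun σ τ ρ h1 h2 x hx => (h1 x hx).trans (h2 x hx)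
  constructor
  · rintro σ σ'' ⟨μ, hA, hCs⟩
    obtain ⟨σ₀', μ', hB, hσ, hμ⟩ := hAB.1 σ μ hA
    obtain ⟨μ₁, σ₁', hDt, hμ1, hσ1⟩ := hCD.1 μ σ'' hCs
    obtain ⟨τ', hD', hτ⟩ := hD μ₁ μ' σ₁' (trans _ _ _ (symm _ _ hμ1) hμ) hDt
    exact ⟨σ₀', τ', ⟨μ', hB, hD'⟩, hσ, trans _ _ _ hσ1 hτ⟩
  · rintro σ σ'' ⟨μ, hB, hDs⟩
    obtain ⟨σ₀', μ', hA, hσ, hμ⟩ := hAB.2 σ μ hB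
    obtain ⟨μ₁, σ₁', hCt, hμ1, hσ1⟩ := hCD.2 μ σ'' hDs
    obtain ⟨τ', hC', hτ⟩ := hC μ₁ μ' σ₁' (trans _ _ _ (symm _ _ hμ1) hμ) hCt
    exact ⟨σ₀', τ', ⟨μ', hA, hC'⟩, hσ, trans _ _ _ hσ1 hτ⟩
end

section
/- Compositionality of H-equivalence under iteration: if the free variables of A and B are contained in H and A ≈_H B (as loop-free programs), then the looped programs A* and B* are H-equivalent in the lock-step sense: for every n and every sequence σ₀,…,σₙ with (σᵢ,σᵢ₊₁) ∈ A for all i, there exists a sequence σ₀',…,σₙ' with (σⱼ',σⱼ₊₁') ∈ B for all j and σₖ ≈_H σₖ' for all k ∈ {0,…,n}, and symmetrically. -/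
/-- Lock-step H-equivalence of the looped programs `α*` and `β*`. -/
def LockStepEq {V : Type*} (H : Set V)
    (α β : State V → State V → Prop) : Prop :=
  (∀ n : ℕ, ∀ σ : ℕ → State V, (∀ i < n, α (σ i) (σ (i + 1))) →
    ∃ τ : ℕ → State V, (∀ j < n, β (τ j) (τ (j + 1))) ∧
      ∀ k ≤ n, StateEq H (σ k) (τ k)) ∧
  (∀ n : ℕ, ∀ σ : ℕ → State V, (∀ i < n, β (σ i) (σ (i + 1))) →
    ∃ τ : ℕ → State V, (∀ j < n, α (τ j) (τ (j + 1))) ∧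
      ∀ k ≤ n, StateEq H (σ k) (τ k))

lemma lockstep_aux {V : Type*} (H : Set V)
    (A B : State V → State V → Prop) (hB : FVIn B H)
    (hAB : ∀ σ₀ σ₁, A σ₀ σ₁ →
      ∃ σ₀' σ₁', B σ₀' σ₁' ∧ StateEq H σ₀ σ₀' ∧ StateEq H σ₁ σ₁') :
    ∀ n : ℕ, ∀ σ : ℕ → State V, (∀ i < n, A (σ i) (σ (i + 1))) →
    ∃ τ : ℕ → State V, (∀ j < n, B (τ j) (τ (j + 1))) ∧
      ∀ k ≤ n, StateEq H (σ k) (τ k) := by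
  intro n
  induction n with
  | zero =>
    intro σ _
    exact ⟨σ, fun j hj => absurd hj (Nat.not_lt_zero j),
      fun k _ x _ => rfl⟩
  | succ n ih =>
    intro σ hσ
    obtain ⟨τ, hτB, hτeq⟩ := ih σ (fun i hi => hσ i (Nat.lt_succ_of_lt hi))
    obtain ⟨a, b, hBab, h0, h1⟩ := hAB _ _ (hσ n (Nat.lt_succ_self n))
    have ha : StateEq H a (τ n) := fun x hx => by
      rw [← h0 x hx, hτeq n le_rfl x hx]
    obtain ⟨s, hBs, hbs⟩ := hB a (τ n) b ha hBab
    refine ⟨fun k => if k ≤ n then τ k else s, ?_, ?_⟩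
    · intro j hj
      rcases Nat.lt_or_ge j n with h | h
      · simp only [Nat.le_of_lt h, Nat.succ_le_of_lt h, if_true]
        exact hτB j h
      · have hjn : j = n := Nat.le_antisymm (Nat.lt_succ_iff.mp hj) h
        subst hjn
        simp only [le_rfl, if_true, Nat.lt_irrefl, Nat.not_succ_le_self,
          if_false]
        exact hBs
    · intro k hk
      rcases Nat.lt_or_ge n k with h | h
      · have : k = n + 1 := Nat.le_antisymm hk h
        subst this
        simp only [Nat.not_succ_le_self, if_false]
        intro x hx
        rw [h1 x hx, hbs x hx]
      · simp only [h, if_true]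
        exact hτeq k h

/-- Compositionality of H-equivalence under iteration. -/
theorem progEq_loop {V : Type*} (H : Set V)
    (A B : State V → State V → Prop)
    (hA : FVIn A H) (hB : FVIn B H) (hAB : ProgEq H A B) :
    LockStepEq H A B :=
  ⟨lockstep_aux H A B hB hAB.1, lockstep_aux H B A hA hAB.2⟩
end
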